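/- Let k ≥ 4 and n ≥ 2k+1. Let F be a k-uniform intersecting family on [n] such that S_{xy}(F) = J₃ for some shift S_{xy}. Then F is isomorphic to J₃. -/

import Mathlib

open Finset

/-- The shift of a single set `A` with respect to `x, y` and the family `F`. -/
def shiftSet {α : Type*} [DecidableEq α] (x y : α) (F : Finset (Finset α))
    (A : Finset α) : Finset α :=
  if x ∉ A ∧ y ∈ A ∧ insert x (A.erase y) ∉ F then insert x (A.erase y) else A

/-- The shifted family `S_{xy}(F)`. -/
def shiftFam {α : Type*} [DecidableEq α] (x y : α) (F : Finset (Finset α)) :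
    Finset (Finset α) :=
  F.image (shiftSet x y F)

/-- The family `J₃` with center `x₀`, kernel `E` and set of pages `J`. -/
def J3fam (n k : ℕ) (x₀ : Fin n) (E J : Finset (Fin n)) : Finset (Finset (Fin n)) :=
  (Finset.univ.powersetCard k).filter
    (fun G => (E ⊆ G ∧ (G ∩ J).Nonempty) ∨ (J ∪ {x₀} ⊆ G) ∨ (x₀ ∈ G ∧ (G ∩ E).Nonempty))

section Helpers

variable {α : Type*} [DecidableEq α]

lemma swp_card {x y : α} {B : Finset α} (hx : x ∈ B) (hy : y ∉ B) :
    (insert y (B.erase x)).card = B.card := by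
  rw [Finset.card_insert_of_notMem (fun h => hy (Finset.mem_of_mem_erase h)),
    Finset.card_erase_of_mem hx]
  have := Finset.card_pos.mpr ⟨x, hx⟩
  omega

lemma mem_swp {x y z : α} {B : Finset α} :
    z ∈ insert y (B.erase x) ↔ z = y ∨ (z ∈ B ∧ z ≠ x) := by
  simp only [Finset.mem_insert, Finset.mem_erase]
  tauto

lemma y_mem_swp {x y : α} {B : Finset α} : y ∈ insert y (B.erase x) := mem_insert_self _ _

lemma x_not_mem_swp {x y : α} (hxy : x ≠ y) {B : Finset α} :
    x ∉ insert y (B.erase x) := by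
  rw [mem_swp]; rintro (rfl | ⟨-, h⟩) <;> simp_all

lemma swp_swp {x y : α} (hxy : x ≠ y) {B : Finset α} (hx : x ∈ B) (hy : y ∉ B) :
    insert x ((insert y (B.erase x)).erase y) = B := by
  ext z
  simp only [Finset.mem_insert, Finset.mem_erase]
  constructor
  · rintro (rfl | ⟨hzy, (rfl | ⟨hzx, hzB⟩)⟩)
    · exact hx
    · exact absurd rfl hzy
    · exact hzB
  · intro hzB
    rcases eq_or_ne z x with rfl | hzx
    · exact Or.inl rfl
    · exact Or.inr ⟨fun h => hy (h ▸ hzB), Or.inr ⟨hzx, hzB⟩⟩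

lemma mem_image_swap {x y z : α} {B : Finset α} :
    z ∈ B.image (Equiv.swap x y) ↔ Equiv.swap x y z ∈ B := by
  rw [Finset.mem_image]
  constructor
  · rintro ⟨w, hw, rfl⟩; rwa [Equiv.swap_apply_self]
  · intro h; exact ⟨_, h, Equiv.swap_apply_self _ _ _⟩

lemma image_swap_left {x y : α} (hxy : x ≠ y) {B : Finset α} (hx : x ∈ B) (hy : y ∉ B) :
    B.image (Equiv.swap x y) = insert y (B.erase x) := by
  ext z
  rw [mem_image_swap, mem_swp]
  rcases eq_or_ne z x with rfl | hzx
  · simp only [Equiv.swap_apply_left]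
    constructor
    · intro h; exact absurd h hy
    · rintro (rfl | ⟨-, h⟩) <;> simp_all
  · rcases eq_or_ne z y with rfl | hzy
    · simp only [Equiv.swap_apply_right]; tauto
    · rw [Equiv.swap_apply_of_ne_of_ne hzx hzy]; tauto

lemma image_swap_id {x y : α} {B : Finset α} (h : x ∈ B ↔ y ∈ B) :
    B.image (Equiv.swap x y) = B := by
  ext z
  rw [mem_image_swap]
  rcases eq_or_ne z x with rfl | hzx
  · rw [Equiv.swap_apply_left]; tauto
  · rcases eq_or_ne z y with rfl | hzy
    · rw [Equiv.swap_apply_right]; tauto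
    · rw [Equiv.swap_apply_of_ne_of_ne hzx hzy]

lemma move_sdiff_eq₁ {x y : α} {S K : Finset α} {u t : α}
    (huK : u ∈ K) (htK : t ∉ K) : (insert u (S.erase t)) \ K = (S \ K).erase t := by
  ext z
  simp only [Finset.mem_sdiff, Finset.mem_insert, Finset.mem_erase]
  constructor
  · rintro ⟨rfl | ⟨hzt, hzS⟩, hzK⟩
    · exact absurd huK hzK
    · exact ⟨hzt, hzS, hzK⟩
  · rintro ⟨hzt, hzS, hzK⟩
    exact ⟨Or.inr ⟨hzt, hzS⟩, hzK⟩

lemma move_sdiff_eq₂ {S K : Finset α} {u t : α}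
    (huK : u ∉ K) : (insert u (S.erase t)) \ K = insert u ((S \ K).erase t) := by
  ext z
  simp only [Finset.mem_sdiff, Finset.mem_insert, Finset.mem_erase]
  constructor
  · rintro ⟨rfl | ⟨hzt, hzS⟩, hzK⟩
    · exact Or.inl rfl
    · exact Or.inr ⟨hzt, hzS, hzK⟩
  · rintro (rfl | ⟨hzt, hzS, hzK⟩)
    · exact ⟨Or.inl rfl, huK⟩
    · exact ⟨Or.inr ⟨hzt, hzS⟩, hzK⟩

lemma move_inter_subset {S X : Finset α} {u t : α} (huX : u ∉ X) :
    (insert u (S.erase t)) ∩ X ⊆ (S ∩ X).erase t := by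
  intro z hz
  rw [Finset.mem_inter, Finset.mem_insert, Finset.mem_erase] at hz
  rcases hz.1 with rfl | ⟨hzt, hzS⟩
  · exact absurd hz.2 huX
  · exact Finset.mem_erase.mpr ⟨hzt, Finset.mem_inter.mpr ⟨hzS, hz.2⟩⟩

end Helpers

section Main

variable {n k : ℕ} {x₀ : Fin n} {E J : Finset (Fin n)}

lemma memJ3 {A : Finset (Fin n)} :
    A ∈ J3fam n k x₀ E J ↔ A.card = k ∧
      ((E ⊆ A ∧ (A ∩ J).Nonempty) ∨ (J ∪ {x₀} ⊆ A) ∨ (x₀ ∈ A ∧ (A ∩ E).Nonempty)) := by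
  unfold J3fam
  rw [Finset.mem_filter, Finset.mem_powersetCard]
  constructor
  · rintro ⟨⟨-, h⟩, h2⟩; exact ⟨h, h2⟩
  · rintro ⟨h, h2⟩; exact ⟨⟨Finset.subset_univ _, h⟩, h2⟩

lemma memJ3_x0 (hk : 4 ≤ k) (hE : E.card = k - 1) {A : Finset (Fin n)} (hA : x₀ ∈ A) :
    A ∈ J3fam n k x₀ E J ↔ A.card = k ∧ ((A ∩ E).Nonempty ∨ J ⊆ A) := by
  rw [memJ3]
  have hEne : E.Nonempty := Finset.card_pos.mp (by omega)
  constructor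
  · rintro ⟨hcard, (⟨hEA, -⟩ | hJA | ⟨-, hAE⟩)⟩
    · exact ⟨hcard, Or.inl ⟨hEne.choose, Finset.mem_inter.mpr ⟨hEA hEne.choose_spec, hEne.choose_spec⟩⟩⟩
    · exact ⟨hcard, Or.inr (fun z hz => hJA (Finset.mem_union_left _ hz))⟩
    · exact ⟨hcard, Or.inl hAE⟩
  · rintro ⟨hcard, (hAE | hJA)⟩
    · exact ⟨hcard, Or.inr (Or.inr ⟨hA, hAE⟩)⟩
    · refine ⟨hcard, Or.inr (Or.inl ?_)⟩
      intro z hz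
      rcases Finset.mem_union.mp hz with h | h
      · exact hJA h
      · rwa [Finset.mem_singleton.mp h]

end Main

section Facts

variable {n k : ℕ} {x y x₀ : Fin n} {E J : Finset (Fin n)} {F : Finset (Finset (Fin n))}

lemma fact1 (hxy : x ≠ y) (hshift : shiftFam x y F = J3fam n k x₀ E J) :
    ∀ B ∈ J3fam n k x₀ E J, (x ∉ B ∨ y ∈ B) → B ∈ F := by
  intro B hB hor
  rw [← hshift, shiftFam, Finset.mem_image] at hB
  obtain ⟨A, hA, hAB⟩ := hB
  unfold shiftSet at hAB
  split_ifs at hAB with h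
  · exfalso
    subst hAB
    rcases hor with h1 | h2
    · exact h1 (mem_insert_self _ _)
    · rw [Finset.mem_insert, Finset.mem_erase] at h2
      rcases h2 with h2 | h2
      · exact hxy h2.symm
      · exact h2.1 rfl
  · exact hAB ▸ hA

lemma fact2 (hxy : x ≠ y) (hshift : shiftFam x y F = J3fam n k x₀ E J) :
    ∀ B ∈ J3fam n k x₀ E J, B ∉ F →
      x ∈ B ∧ y ∉ B ∧ insert y (B.erase x) ∈ F ∧ insert y (B.erase x) ∉ J3fam n k x₀ E J := by
  intro B hB hBF
  have hB' := hB
  rw [← hshift, shiftFam, Finset.mem_image] at hB'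
  obtain ⟨A, hA, hAB⟩ := hB'
  unfold shiftSet at hAB
  split_ifs at hAB with h
  · obtain ⟨hxA, hyA, hinsF⟩ := h
    subst hAB
    have hxB : x ∈ insert x (A.erase y) := mem_insert_self _ _
    have hyB : y ∉ insert x (A.erase y) := x_not_mem_swp (Ne.symm hxy)
    have hback : insert y ((insert x (A.erase y)).erase x) = A := swp_swp (Ne.symm hxy) hyA hxA
    refine ⟨hxB, hyB, by rw [hback]; exact hA, ?_⟩
    rw [hback]
    -- A ∉ J3fam
    intro hAG
    rw [← hshift, shiftFam, Finset.mem_image] at hAG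
    obtain ⟨A', hA', hAA'⟩ := hAG
    unfold shiftSet at hAA'
    split_ifs at hAA' with h2
    · subst hAA'
      exact hxA (mem_insert_self _ _)
    · subst hAA'
      -- shiftSet of A is insert x (A.erase y) ≠ A, but A ∈ F means shiftSet A ∈ image;
      -- here A' = A and shiftSet A = A contradiction with the if-condition
      exact h2 ⟨hxA, hyA, hinsF⟩
  · exact absurd (hAB ▸ hA) hBF

lemma fact3 (hxy : x ≠ y) (hshift : shiftFam x y F = J3fam n k x₀ E J) :
    ∀ A ∈ F, A ∉ J3fam n k x₀ E J →
      y ∈ A ∧ x ∉ A ∧ insert x (A.erase y) ∈ J3fam n k x₀ E J ∧ insert x (A.erase y) ∉ F := by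
  intro A hA hAG
  have hs : shiftSet x y F A ∈ J3fam n k x₀ E J := by
    rw [← hshift, shiftFam]
    exact Finset.mem_image_of_mem _ hA
  unfold shiftSet at hs
  split_ifs at hs with h
  · exact ⟨h.2.1, h.1, hs, h.2.2⟩
  · exact absurd hs hAG

lemma fact4 (hxy : x ≠ y) (hshift : shiftFam x y F = J3fam n k x₀ E J) :
    ∀ A ∈ J3fam n k x₀ E J, y ∈ A → x ∉ A →
      insert x (A.erase y) ∈ J3fam n k x₀ E J ∧ insert x (A.erase y) ∈ F := by
  intro A hAG hyA hxA
  have hAF : A ∈ F := fact1 hxy hshift A hAG (Or.inl hxA)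
  set B := insert x (A.erase y) with hBdef
  by_cases hBF : B ∈ F
  · refine ⟨?_, hBF⟩
    by_contra hBG
    obtain ⟨-, hxB, -, -⟩ := fact3 hxy hshift B hBF hBG
    exact hxB (hBdef ▸ mem_insert_self _ _)
  · have hs : shiftSet x y F A ∈ J3fam n k x₀ E J := by
      rw [← hshift, shiftFam]
      exact Finset.mem_image_of_mem _ hAF
    unfold shiftSet at hs
    rw [if_pos ⟨hxA, hyA, hBF⟩] at hs
    exfalso
    obtain ⟨-, -, -, hA'G⟩ := fact2 hxy hshift B hs hBF
    rw [hBdef, swp_swp (Ne.symm hxy) hyA hxA] at hA'G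
    exact hA'G hAG

lemma rule_lemma (hxy : x ≠ y) (hshift : shiftFam x y F = J3fam n k x₀ E J)
    (hint : ∀ A ∈ F, ∀ B ∈ F, (A ∩ B).Nonempty) :
    ∀ B C : Finset (Fin n), B ∈ J3fam n k x₀ E J → B ∉ F → C ∈ J3fam n k x₀ E J →
      y ∉ C → C ∩ B ⊆ {x} → C ∉ F := by
  intro B C hBG hBF hCG hyC hsub hCF
  obtain ⟨-, -, hAF, -⟩ := fact2 hxy hshift B hBG hBF
  obtain ⟨z, hz⟩ := hint _ hAF _ hCF
  rw [Finset.mem_inter, mem_swp] at hz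
  rcases hz.1 with rfl | ⟨hzB, hzx⟩
  · exact hyC hz.2
  · have : z ∈ ({x} : Finset (Fin n)) := hsub (Finset.mem_inter.mpr ⟨hz.2, hzB⟩)
    exact hzx (Finset.mem_singleton.mp this)

end Facts

lemma key_lemma {n k : ℕ} (hk : 4 ≤ k) (hn : 2 * k + 1 ≤ n)
    {x y x₀ : Fin n} {E J : Finset (Fin n)} {F : Finset (Finset (Fin n))}
    (hxy : x ≠ y)
    (hE : E.card = k - 1) (hx₀ : x₀ ∉ E)
    (hJ : J.card = 3) (hJdisj : Disjoint J (insert x₀ E))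
    (hshift : shiftFam x y F = J3fam n k x₀ E J)
    (hint : ∀ A ∈ F, ∀ B ∈ F, (A ∩ B).Nonempty)
    (B₀ : Finset (Fin n)) (hB₀G : B₀ ∈ J3fam n k x₀ E J) (hB₀F : B₀ ∉ F) :
    ∀ C ∈ J3fam n k x₀ E J, x ∈ C → y ∉ C → insert y (C.erase x) ∉ J3fam n k x₀ E J →
      C ∉ F := by
  have hJx₀ : x₀ ∉ J := fun h => (Finset.disjoint_left.mp hJdisj h) (mem_insert_self _ _)
  have hJE : ∀ z ∈ J, z ∉ E := fun z hz he =>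
    (Finset.disjoint_left.mp hJdisj hz) (mem_insert_of_mem he)
  have hEk : 3 ≤ E.card := by omega
  have hnn : k + 3 ≤ n := by omega
  have hrule := rule_lemma hxy hshift hint
  obtain ⟨hxB₀, hyB₀, hAB₀F, hAB₀G⟩ := fact2 hxy hshift B₀ hB₀G hB₀F
  have hcardB₀ : B₀.card = k := (memJ3.mp hB₀G).1
  -- not in G criterion
  have notG : ∀ A : Finset (Fin n), x₀ ∉ A → ¬ E ⊆ A → A ∉ J3fam n k x₀ E J := by
    intro A h1 h2 hA
    rcases memJ3.mp hA with ⟨-, (⟨h, -⟩ | h | ⟨h, -⟩)⟩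
    · exact h2 h
    · exact h1 (h (mem_union_right _ (mem_singleton_self _)))
    · exact h1 h
  -- pick elements of E avoiding two given points
  have pick2 : ∀ a b : Fin n, ∃ e' ∈ E, e' ≠ a ∧ e' ≠ b := by
    intro a b
    have h1 : E.card - 2 ≤ ((E.erase a).erase b).card := by
      have := Finset.pred_card_le_card_erase (s := E.erase a) (a := b)
      have := Finset.pred_card_le_card_erase (s := E) (a := a)
      omega
    have h2 : ((E.erase a).erase b).Nonempty := Finset.card_pos.mp (by omega)
    obtain ⟨e', he'⟩ := h2
    rw [Finset.mem_erase, Finset.mem_erase] at he'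
    exact ⟨e', he'.2.2, he'.2.1, he'.1⟩
  -- cardinality of available pools
  have poolcard : ∀ S : Finset (Fin n), (univ \ S).card = n - S.card := by
    intro S
    rw [Finset.card_sdiff_of_subset (subset_univ _), Finset.card_univ, Fintype.card_fin]
  -- y ≠ x₀
  have hyx₀ : y ≠ x₀ := by
    intro hy0
    have hxx₀ : x ≠ x₀ := fun h => hxy (h.trans hy0.symm)
    obtain ⟨e, heE, hex, -⟩ := pick2 x x
    have hpool : k - 2 ≤ (univ \ (E ∪ {x₀, x})).card := by
      have h1 : (E ∪ {x₀, x}).card ≤ (k - 1) + 2 := by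
        calc (E ∪ {x₀, x}).card ≤ E.card + ({x₀, x} : Finset (Fin n)).card :=
              Finset.card_union_le _ _
        _ ≤ (k - 1) + 2 := by
              have := Finset.card_insert_le x₀ ({x} : Finset (Fin n))
              simp only [Finset.card_singleton] at this
              omega
      have := poolcard (E ∪ {x₀, x})
      omega
    obtain ⟨Q, hQsub, hQcard⟩ := Finset.exists_subset_card_eq hpool
    have hQ : ∀ z ∈ Q, z ∉ E ∧ z ≠ x₀ ∧ z ≠ x := by
      intro z hz
      have := hQsub hz
      rw [Finset.mem_sdiff, Finset.mem_union, Finset.mem_insert, Finset.mem_singleton] at this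
      push_neg at this
      exact ⟨this.2.1, this.2.2.1, this.2.2.2⟩
    set A := insert x₀ (insert e Q) with hAdef
    have hx₀A : x₀ ∈ A := mem_insert_self _ _
    have hxA : x ∉ A := by
      simp only [hAdef, Finset.mem_insert]
      push_neg
      exact ⟨hxx₀, Ne.symm hex, fun h => (hQ x h).2.2 rfl⟩
    have hcardA : A.card = k := by
      rw [hAdef, Finset.card_insert_of_notMem, Finset.card_insert_of_notMem]
      · omega
      · exact fun h => (hQ e h).1 heE
      · simp only [Finset.mem_insert]
        push_neg
        exact ⟨fun h => hx₀ (h ▸ heE), fun h => (hQ x₀ h).2.1 rfl⟩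
    have hAG : A ∈ J3fam n k x₀ E J := by
      rw [memJ3_x0 hk hE hx₀A]
      exact ⟨hcardA, Or.inl ⟨e, Finset.mem_inter.mpr ⟨mem_insert_of_mem (mem_insert_self _ _), heE⟩⟩⟩
    obtain ⟨hA'G, -⟩ := fact4 hxy hshift A hAG (by rw [hy0]; exact hx₀A) hxA
    rw [hy0] at hA'G
    -- but insert x (A.erase x₀) ∉ G
    obtain ⟨e₂, he₂E, he₂e, he₂x⟩ := pick2 e x
    refine notG (insert x (A.erase x₀)) ?_ ?_ hA'G
    · rw [mem_swp]
      rintro (h | ⟨-, h⟩)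
      · exact hxx₀ h.symm
      · exact h rfl
    · intro hEsub
      have := hEsub he₂E
      rw [mem_swp] at this
      rcases this with h | ⟨h, -⟩
      · exact he₂x h
      · rcases Finset.mem_insert.mp h with h | h
        · exact hx₀ (h ▸ he₂E)
        · rcases Finset.mem_insert.mp h with h | h
          · exact he₂e h
          · exact (hQ e₂ h).1 he₂E
  -- MAIN case split on position of x
  intro C hCG hxC hyC hswC
  -- shape of sets of the first kind
  have shapeE : ∀ D : Finset (Fin n), D ∈ J3fam n k x₀ E J → E ⊆ D → (D ∩ J).Nonempty →
      ∃ j ∈ J, j ∉ E ∧ D = insert j E := by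
    intro D hD hED hDJ
    obtain ⟨j, hj⟩ := hDJ
    rw [Finset.mem_inter] at hj
    have hjE : j ∉ E := hJE j hj.2
    have hcardD : D.card = k := (memJ3.mp hD).1
    have hsd : (D \ E).card = 1 := by
      rw [Finset.card_sdiff_of_subset hED]; omega
    obtain ⟨a, ha⟩ := Finset.card_eq_one.mp hsd
    have hja : j = a := by
      have : j ∈ D \ E := Finset.mem_sdiff.mpr ⟨hj.1, hjE⟩
      rw [ha, Finset.mem_singleton] at this; exact this
    refine ⟨j, hj.2, hjE, ?_⟩
    ext z
    rw [Finset.mem_insert]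
    constructor
    · intro hz
      by_cases hzE : z ∈ E
      · exact Or.inr hzE
      · left
        have : z ∈ D \ E := Finset.mem_sdiff.mpr ⟨hz, hzE⟩
        rw [ha, Finset.mem_singleton] at this
        exact this.trans hja.symm
    · rintro (rfl | hz)
      · exact hj.1
      · exact hED hz
  by_cases hxx₀ : x = x₀
  · -- hard case: walks
    subst hxx₀
    -- now x plays the role of x₀.  Setup.
    set E₁ := E.erase y with hE₁def
    have hE₁sub : E₁ ⊆ E := Finset.erase_subset _ _
    have hyE₁ : y ∉ E₁ := Finset.notMem_erase _ _
    have hxE : x ∉ E := hx₀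
    have hxE₁ : x ∉ E₁ := fun h => hxE (hE₁sub h)
    have hm₁ : k - 2 ≤ E₁.card ∧ E₁.card ≤ k - 1 := by
      have h1 := Finset.pred_card_le_card_erase (s := E) (a := y)
      have h2 := Finset.card_erase_le (s := E) (a := y)
      rw [← hE₁def] at h1 h2
      omega
    set O : Finset (Fin n) := univ \ (E ∪ J ∪ {x}) with hOdef
    have hOmem : ∀ z, z ∈ O ↔ z ∉ E ∧ z ∉ J ∧ z ≠ x := by
      intro z
      rw [hOdef, Finset.mem_sdiff, Finset.mem_union, Finset.mem_union, Finset.mem_singleton]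
      push_neg
      simp only [Finset.mem_univ, true_and]
      tauto
    have hcardO : k - 2 ≤ O.card := by
      have h1 : (E ∪ J ∪ {x}).card ≤ (k - 1) + 3 + 1 := by
        calc (E ∪ J ∪ {x}).card ≤ (E ∪ J).card + ({x} : Finset (Fin n)).card :=
            Finset.card_union_le _ _
        _ ≤ E.card + J.card + 1 := by
            have := Finset.card_union_le E J
            simp only [Finset.card_singleton]
            omega
        _ = (k - 1) + 3 + 1 := by rw [hE, hJ]
      have h2 := poolcard (E ∪ J ∪ {x})
      rw [← hOdef] at h2
      omega
    -- pick o* ∈ O, ≠ y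
    have hOy : ((O.erase y)).Nonempty := by
      rw [← Finset.card_pos]
      have := Finset.pred_card_le_card_erase (s := O) (a := y)
      omega
    obtain ⟨ostar, hostar⟩ := hOy
    rw [Finset.mem_erase] at hostar
    obtain ⟨hoy, hoO⟩ := hostar
    rw [hOmem] at hoO
    -- pick W ⊆ E₁ of size k - 2
    obtain ⟨W, hWsub, hWcard⟩ := Finset.exists_subset_card_eq (s := E₁) (n := k - 2) hm₁.1
    have hWE : W ⊆ E := fun z hz => hE₁sub (hWsub hz)
    -- the canonical target K
    set K : Finset (Fin n) := insert x (insert ostar W) with hKdef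
    have hxK : x ∈ K := mem_insert_self _ _
    have hoK : ostar ∈ K := mem_insert_of_mem (mem_insert_self _ _)
    have hWK : W ⊆ K := fun z hz => mem_insert_of_mem (mem_insert_of_mem hz)
    have hyK : y ∉ K := by
      rw [hKdef, Finset.mem_insert, Finset.mem_insert]
      push_neg
      exact ⟨Ne.symm hxy, Ne.symm hoy, fun h => hyE₁ (hWsub h)⟩
    have hoE : ostar ∉ E := hoO.1
    have hoW : ostar ∉ W := fun h => hoE (hWE h)
    have hxW : x ∉ W := fun h => hxE (hWE h)
    have hcardK : K.card = k := by
      rw [hKdef, Finset.card_insert_of_notMem, Finset.card_insert_of_notMem hoW, hWcard]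
      · omega
      · rw [Finset.mem_insert]
        push_neg
        exact ⟨fun h => hoO.2.2 h.symm, hxW⟩
    have hWne : W.Nonempty := Finset.card_pos.mp (by omega)
    have hKG : K ∈ J3fam n k x E J := by
      rw [memJ3_x0 hk hE hxK]
      exact ⟨hcardK, Or.inl ⟨hWne.choose, Finset.mem_inter.mpr
        ⟨hWK hWne.choose_spec, hWE hWne.choose_spec⟩⟩⟩
    -- R construction
    have haveR : ∀ T : Finset (Fin n), T.card ≤ k + 1 → x ∈ T → y ∉ T →
        ((∃ e ∈ E, e ≠ y ∧ e ∉ T) ∨ (J ∩ T = ∅ ∧ y ∉ J)) →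
        ∃ R, R ∈ J3fam n k x E J ∧ y ∉ R ∧ R ∩ T ⊆ {x} := by
      intro T hTcard hxT hyT hbr
      rcases hbr with ⟨e, heE, hey, heT⟩ | ⟨hJT, hyJ⟩
      · have hpool : k - 2 ≤ (univ \ (T ∪ {y, e})).card := by
          have h1 : (T ∪ {y, e}).card ≤ (k + 1) + 2 := by
            calc (T ∪ {y, e}).card ≤ T.card + ({y, e} : Finset (Fin n)).card :=
                Finset.card_union_le _ _
            _ ≤ (k + 1) + 2 := by
                have := Finset.card_insert_le y ({e} : Finset (Fin n))
                simp only [Finset.card_singleton] at this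
                omega
          have := poolcard (T ∪ {y, e})
          omega
        obtain ⟨Q, hQsub, hQcard⟩ := Finset.exists_subset_card_eq hpool
        have hQ : ∀ z ∈ Q, z ∉ T ∧ z ≠ y ∧ z ≠ e := by
          intro z hz
          have := hQsub hz
          rw [Finset.mem_sdiff, Finset.mem_union, Finset.mem_insert, Finset.mem_singleton] at this
          push_neg at this
          exact this.2
        refine ⟨insert x (insert e Q), ?_, ?_, ?_⟩
        · rw [memJ3_x0 hk hE (mem_insert_self _ _)]
          constructor
          · rw [Finset.card_insert_of_notMem, Finset.card_insert_of_notMem, hQcard]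
            · omega
            · exact fun h => (hQ e h).2.2 rfl
            · rw [Finset.mem_insert]
              push_neg
              exact ⟨fun h => hxE (h ▸ heE), fun h => (hQ x h).1 hxT⟩
          · exact Or.inl ⟨e, Finset.mem_inter.mpr ⟨mem_insert_of_mem (mem_insert_self _ _), heE⟩⟩
        · rw [Finset.mem_insert, Finset.mem_insert]
          push_neg
          exact ⟨Ne.symm hxy, Ne.symm hey, fun h => (hQ y h).2.1 rfl⟩
        · intro z hz
          rw [Finset.mem_inter, Finset.mem_insert, Finset.mem_insert] at hz
          rw [Finset.mem_singleton]
          rcases hz.1 with rfl | rfl | hzQ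
          · rfl
          · exact absurd hz.2 heT
          · exact absurd hz.2 (hQ z hzQ).1
      · have hpool : k - 4 ≤ (univ \ (T ∪ J ∪ {y})).card := by
          have h1 : (T ∪ J ∪ {y}).card ≤ (k + 1) + 3 + 1 := by
            calc (T ∪ J ∪ {y}).card ≤ (T ∪ J).card + ({y} : Finset (Fin n)).card :=
                Finset.card_union_le _ _
            _ ≤ T.card + J.card + 1 := by
                have := Finset.card_union_le T J
                simp only [Finset.card_singleton]
                omega
            _ ≤ (k + 1) + 3 + 1 := by rw [hJ]; omega
          have := poolcard (T ∪ J ∪ {y})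
          omega
        obtain ⟨Q, hQsub, hQcard⟩ := Finset.exists_subset_card_eq hpool
        have hQ : ∀ z ∈ Q, z ∉ T ∧ z ∉ J ∧ z ≠ y := by
          intro z hz
          have := hQsub hz
          rw [Finset.mem_sdiff, Finset.mem_union, Finset.mem_union, Finset.mem_singleton] at this
          push_neg at this
          exact ⟨this.2.1.1, this.2.1.2, this.2.2⟩
        have hJQ : Disjoint J Q := by
          rw [Finset.disjoint_left]
          exact fun a haJ haQ => (hQ a haQ).2.1 haJ
        refine ⟨insert x (J ∪ Q), ?_, ?_, ?_⟩
        · rw [memJ3_x0 hk hE (mem_insert_self _ _)]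
          constructor
          · rw [Finset.card_insert_of_notMem, Finset.card_union_of_disjoint hJQ, hJ, hQcard]
            · omega
            · rw [Finset.mem_union]
              push_neg
              exact ⟨hJx₀, fun h => (hQ x h).1 hxT⟩
          · exact Or.inr (fun z hz => mem_insert_of_mem (Finset.mem_union_left _ hz))
        · rw [Finset.mem_insert, Finset.mem_union]
          push_neg
          exact ⟨Ne.symm hxy, hyJ, fun h => (hQ y h).2.2 rfl⟩
        · intro z hz
          rw [Finset.mem_inter, Finset.mem_insert, Finset.mem_union] at hz
          rw [Finset.mem_singleton]
          rcases hz.1 with rfl | hzJ | hzQ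
          · rfl
          · exfalso
            have : z ∈ J ∩ T := Finset.mem_inter.mpr ⟨hzJ, hz.2⟩
            rw [hJT] at this
            exact absurd this (Finset.notMem_empty z)
          · exact absurd hz.2 (hQ z hzQ).1
    -- the step lemma
    have step : ∀ S : Finset (Fin n), ∀ u t : Fin n,
        S ∈ J3fam n k x E J → x ∈ S → y ∉ S → t ∈ S → t ≠ x → u ∉ S → u ≠ y →
        ((insert u (S.erase t)) ∩ E).Nonempty →
        ((∃ e ∈ E, e ≠ y ∧ e ∉ S ∧ e ≠ u) ∨ (S ∩ J = ∅ ∧ u ∉ J ∧ y ∉ J)) →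
        (insert u (S.erase t) ∈ J3fam n k x E J ∧ (S ∉ F ↔ insert u (S.erase t) ∉ F)) := by
      intro S u t hSG hxS hyS htS htx huS huy hpred hbr
      have hcardS : S.card = k := (memJ3.mp hSG).1
      have hxS' : x ∈ insert u (S.erase t) :=
        mem_insert_of_mem (Finset.mem_erase.mpr ⟨Ne.symm htx, hxS⟩)
      have hcardS' : (insert u (S.erase t)).card = k := by
        rw [Finset.card_insert_of_notMem (fun h => huS (Finset.mem_of_mem_erase h)),
          Finset.card_erase_of_mem htS]
        omega
      have hyS' : y ∉ insert u (S.erase t) := by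
        rw [Finset.mem_insert]
        push_neg
        exact ⟨Ne.symm huy, fun h => hyS (Finset.mem_of_mem_erase h)⟩
      have hS'G : insert u (S.erase t) ∈ J3fam n k x E J := by
        rw [memJ3_x0 hk hE hxS']
        exact ⟨hcardS', Or.inl hpred⟩
      refine ⟨hS'G, ?_⟩
      -- build R
      have hR : ∃ R, R ∈ J3fam n k x E J ∧ y ∉ R ∧ R ∩ (insert u S) ⊆ {x} := by
        apply haveR
        · rw [Finset.card_insert_of_notMem huS]; omega
        · exact mem_insert_of_mem hxS
        · rw [Finset.mem_insert]
          push_neg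
          exact ⟨Ne.symm huy, hyS⟩
        · rcases hbr with ⟨e, heE, hey, heS, heu⟩ | ⟨hSJ, huJ, hyJ⟩
          · refine Or.inl ⟨e, heE, hey, ?_⟩
            rw [Finset.mem_insert]
            push_neg
            exact ⟨fun h => heu h, heS⟩
          · refine Or.inr ⟨?_, hyJ⟩
            rw [Finset.eq_empty_iff_forall_notMem]
            intro z hz
            rw [Finset.mem_inter, Finset.mem_insert] at hz
            rcases hz.2 with rfl | hzS
            · exact huJ hz.1
            · have : z ∈ S ∩ J := Finset.mem_inter.mpr ⟨hzS, hz.1⟩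
              rw [hSJ] at this
              exact absurd this (Finset.notMem_empty z)
      obtain ⟨R, hRG, hyR, hRT⟩ := hR
      have comm : ∀ A B : Finset (Fin n), A ∩ B ⊆ {x} → B ∩ A ⊆ {x} := fun A B h z hz =>
        h (Finset.mem_inter.mpr ⟨(Finset.mem_inter.mp hz).2, (Finset.mem_inter.mp hz).1⟩)
      have hRS : R ∩ S ⊆ {x} := fun z hz => hRT (Finset.mem_inter.mpr
        ⟨(Finset.mem_inter.mp hz).1, mem_insert_of_mem (Finset.mem_inter.mp hz).2⟩)
      have hRS' : R ∩ insert u (S.erase t) ⊆ {x} := by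
        intro z hz
        rw [Finset.mem_inter] at hz
        apply hRT
        rw [Finset.mem_inter, Finset.mem_insert]
        refine ⟨hz.1, ?_⟩
        rcases Finset.mem_insert.mp hz.2 with rfl | h
        · exact Or.inl rfl
        · exact Or.inr (Finset.mem_of_mem_erase h)
      constructor
      · intro hSF
        have hRF : R ∉ F := hrule S R hSG hSF hRG hyR hRS
        exact hrule R _ hRG hRF hS'G hyS' (comm _ _ hRS')
      · intro hS'F
        have hRF : R ∉ F := hrule _ R hS'G hS'F hRG hyR hRS'
        exact hrule R S hRG hRF hSG hyS (comm _ _ hRS)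
    -- goodness from "shift-back not in G"
    have goodOf : ∀ D : Finset (Fin n), D ∈ J3fam n k x E J → x ∈ D → y ∉ D →
        insert y (D.erase x) ∉ J3fam n k x E J →
        ¬(E₁ ⊆ D ∧ ((D ∩ J).Nonempty ∨ y ∈ J)) := by
      rintro D hDG hxD hyD hswD ⟨hE₁D, hor⟩
      apply hswD
      rw [memJ3]
      refine ⟨by rw [swp_card hxD hyD]; exact (memJ3.mp hDG).1, Or.inl ⟨?_, ?_⟩⟩
      · intro z hzE
        rcases eq_or_ne z y with rfl | hzy
        · exact y_mem_swp
        · exact mem_swp.mpr (Or.inr ⟨hE₁D (Finset.mem_erase.mpr ⟨hzy, hzE⟩),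
            fun h => hxE (h ▸ hzE)⟩)
      · rcases hor with ⟨j, hj⟩ | hyJ
        · rw [Finset.mem_inter] at hj
          exact ⟨j, Finset.mem_inter.mpr ⟨mem_swp.mpr
            (Or.inr ⟨hj.1, fun h => hJx₀ (h ▸ hj.2)⟩), hj.2⟩⟩
        · exact ⟨y, Finset.mem_inter.mpr ⟨y_mem_swp, hyJ⟩⟩
    -- existence of a fresh element of O
    have existsO : ∀ S : Finset (Fin n), S.card = k → x ∈ S → y ∉ S →
        E₁.card - 1 ≤ (E₁ ∩ S).card → ((S ∩ J).Nonempty ∨ y ∈ J) →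
        ∃ o₂, o₂ ∈ O ∧ o₂ ∉ S ∧ o₂ ≠ y := by
      intro S hcardS hxS hyS hE₁S hj
      have hbig : ∃ U₁ : Finset (Fin n), U₁ ⊆ S ∧ (∀ z ∈ U₁, z ∉ O) ∧
          E₁.card - 1 + (if (S ∩ J).Nonempty then 1 else 0) + 1 ≤ U₁.card := by
        refine ⟨(E₁ ∩ S) ∪ ((J ∩ S) ∪ {x}), ?_, ?_, ?_⟩
        · intro z hz
          rcases Finset.mem_union.mp hz with h | h
          · exact (Finset.mem_inter.mp h).2
          · rcases Finset.mem_union.mp h with h | h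
            · exact (Finset.mem_inter.mp h).2
            · rwa [Finset.mem_singleton.mp h]
        · intro z hz hzO
          rw [hOmem] at hzO
          rcases Finset.mem_union.mp hz with h | h
          · exact hzO.1 (hE₁sub (Finset.mem_inter.mp h).1)
          · rcases Finset.mem_union.mp h with h | h
            · exact hzO.2.1 (Finset.mem_inter.mp h).1
            · exact hzO.2.2 (Finset.mem_singleton.mp h)
        · have hd1 : Disjoint (E₁ ∩ S) ((J ∩ S) ∪ {x}) := by
            rw [Finset.disjoint_left]
            intro a ha hb
            have haE : a ∈ E := hE₁sub (Finset.mem_inter.mp ha).1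
            rcases Finset.mem_union.mp hb with h | h
            · exact hJE a (Finset.mem_inter.mp h).1 haE
            · exact hxE ((Finset.mem_singleton.mp h) ▸ haE)
          have hd2 : Disjoint (J ∩ S) ({x} : Finset (Fin n)) := by
            rw [Finset.disjoint_left]
            intro a ha hb
            exact hJx₀ ((Finset.mem_singleton.mp hb) ▸ (Finset.mem_inter.mp ha).1)
          rw [Finset.card_union_of_disjoint hd1, Finset.card_union_of_disjoint hd2,
            Finset.card_singleton]
          have hJS : (if (S ∩ J).Nonempty then 1 else 0 : ℕ) ≤ (J ∩ S).card := by
            split_ifs with h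
            · rw [Finset.inter_comm] at h
              exact Finset.card_pos.mpr h
            · omega
          omega
      obtain ⟨U₁, hU₁S, hU₁O, hU₁card⟩ := hbig
      have hSO : (S ∩ O).card ≤ k - (E₁.card - 1 + (if (S ∩ J).Nonempty then 1 else 0) + 1) := by
        have h1 : S ∩ O ⊆ S \ U₁ := by
          intro z hz
          rw [Finset.mem_inter] at hz
          rw [Finset.mem_sdiff]
          exact ⟨hz.1, fun h => hU₁O z h hz.2⟩
        have h2 := Finset.card_le_card h1
        rw [Finset.card_sdiff_of_subset hU₁S, hcardS] at h2
        omega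
      have hOS : (O \ insert y S).Nonempty := by
        rw [← Finset.card_pos]
        have h3 : O ∩ insert y S ⊆ insert y (S ∩ O) := by
          intro z hz
          rw [Finset.mem_inter, Finset.mem_insert] at hz
          rw [Finset.mem_insert]
          rcases hz.2 with h | h
          · exact Or.inl h
          · exact Or.inr (Finset.mem_inter.mpr ⟨h, hz.1⟩)
        have h4 : (O ∩ insert y S).card ≤ (S ∩ O).card + 1 := by
          have := Finset.card_le_card h3
          have := Finset.card_insert_le y (S ∩ O)
          omega
        have h5 := Finset.card_inter_add_card_sdiff O (insert y S)
        -- now numeric case analysis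
        by_cases hyO : y ∈ O
        · -- then y ∉ E and y ∉ J, so E₁ = E and (S∩J).Nonempty
          rw [hOmem] at hyO
          have hE₁E : E₁ = E := by rw [hE₁def, Finset.erase_eq_of_notMem hyO.1]
          have hjS : (S ∩ J).Nonempty := by
            rcases hj with h | h
            · exact h
            · exact absurd h hyO.2.1
          rw [if_pos hjS] at hSO
          rw [hE₁E] at hSO
          omega
        · -- y ∉ O : sharpen h4
          have h3' : O ∩ insert y S ⊆ S ∩ O := by
            intro z hz
            rw [Finset.mem_inter, Finset.mem_insert] at hz
            rcases hz.2 with rfl | h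
            · exact absurd hz.1 hyO
            · exact Finset.mem_inter.mpr ⟨h, hz.1⟩
          have h4' := Finset.card_le_card h3'
          rcases hj with h | h
          · rw [if_pos h] at hSO
            omega
          · -- y ∈ J hence y ∉ E and E₁ = E
            have hyE : y ∉ E := hJE y h
            have hE₁E : E₁ = E := by rw [hE₁def, Finset.erase_eq_of_notMem hyE]
            rw [hE₁E] at hSO
            have : (if (S ∩ J).Nonempty then 1 else 0 : ℕ) ≥ 0 := by omega
            split_ifs at hSO <;> omega
      obtain ⟨o₂, ho₂⟩ := hOS
      rw [Finset.mem_sdiff, Finset.mem_insert] at ho₂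
      push_neg at ho₂
      exact ⟨o₂, ho₂.1, ho₂.2.2, ho₂.2.1⟩
    -- bound on the secondary measure
    have hrbound : ∀ S : Finset (Fin n), (S ∩ (J ∪ (E₁ \ W))).card ≤ 4 := by
      intro S
      have h1 : (S ∩ (J ∪ (E₁ \ W))).card ≤ (J ∪ (E₁ \ W)).card :=
        Finset.card_le_card (Finset.inter_subset_right)
      have h2 := Finset.card_union_le J (E₁ \ W)
      have h3 : (E₁ \ W).card ≤ 1 := by
        rw [Finset.card_sdiff_of_subset hWsub, hWcard]
        omega
      omega
    -- THE WALK
    have walk : ∀ N : ℕ, ∀ S : Finset (Fin n), S ∈ J3fam n k x E J → x ∈ S → y ∉ S →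
        ¬(E₁ ⊆ S ∧ ((S ∩ J).Nonempty ∨ y ∈ J)) →
        5 * (S \ K).card + (S ∩ (J ∪ (E₁ \ W))).card ≤ N →
        (S ∉ F ↔ K ∉ F) := by
      intro N
      induction N with
      | zero =>
        intro S hSG hxS hyS hgood hμ
        have hcardS : S.card = k := (memJ3.mp hSG).1
        have hd : (S \ K).card = 0 := by omega
        have hSsub : S ⊆ K := by
          rw [← Finset.sdiff_eq_empty_iff_subset]
          exact Finset.card_eq_zero.mp hd
        have : S = K := Finset.eq_of_subset_of_card_le hSsub (by omega)
        rw [this]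
      | succ N ih =>
        intro S hSG hxS hyS hgood hμ
        have hcardS : S.card = k := (memJ3.mp hSG).1
        by_cases hSK : S = K
        · rw [hSK]
        · have hSKne : (S \ K).Nonempty := by
            rw [Finset.sdiff_nonempty]
            intro hsub
            exact hSK (Finset.eq_of_subset_of_card_le hsub (by omega))
          obtain ⟨t₀, ht₀⟩ := hSKne
          rw [Finset.mem_sdiff] at ht₀
          have ht₀x : t₀ ≠ x := fun h => ht₀.2 (h ▸ hxK)
          by_cases h1 : ∃ u ∈ W, u ∉ S ∧ ¬ E₁ ⊆ insert u S
          · obtain ⟨u, huW, huS, hE₁u⟩ := h1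
            obtain ⟨e, heE₁, heuS⟩ := Finset.not_subset.mp hE₁u
            rw [Finset.mem_insert] at heuS
            push_neg at heuS
            have heE : e ∈ E := hE₁sub heE₁
            have hey : e ≠ y := (Finset.mem_erase.mp heE₁).1
            have huE : u ∈ E := hWE huW
            have huy : u ≠ y := (Finset.mem_erase.mp (hWsub huW)).1
            obtain ⟨hS'G, hiff⟩ := step S u t₀ hSG hxS hyS ht₀.1 ht₀x huS huy
              ⟨u, Finset.mem_inter.mpr ⟨mem_insert_self _ _, huE⟩⟩
              (Or.inl ⟨e, heE, hey, heuS.2, heuS.1⟩)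
            rw [hiff]
            apply ih _ hS'G (mem_insert_of_mem (Finset.mem_erase.mpr ⟨Ne.symm ht₀x, hxS⟩))
              (by rw [Finset.mem_insert]; push_neg;
                  exact ⟨Ne.symm huy, fun h => hyS (Finset.mem_of_mem_erase h)⟩)
            · rintro ⟨hc, -⟩
              refine heuS.1 ?_
              have := hc heE₁
              rcases Finset.mem_insert.mp this with h | h
              · exact h
              · exact absurd (Finset.mem_of_mem_erase h) heuS.2
            · have hd : ((insert u (S.erase t₀)) \ K).card + 1 = (S \ K).card := by
                rw [move_sdiff_eq₁ (x := x) (y := y) (hWK huW) ht₀.2,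
                  Finset.card_erase_of_mem (Finset.mem_sdiff.mpr ht₀)]
                have : 0 < (S \ K).card := Finset.card_pos.mpr ⟨t₀, Finset.mem_sdiff.mpr ht₀⟩
                omega
              have hr := hrbound (insert u (S.erase t₀))
              omega
          · push_neg at h1
            by_cases h2 : W ⊆ S
            · -- almost done: one more step to K
              have hTsub : insert x W ⊆ S := Finset.insert_subset hxS h2
              have hcardT : (insert x W).card = k - 1 := by
                rw [Finset.card_insert_of_notMem hxW, hWcard]; omega
              have hone : (S \ insert x W).card = 1 := by
                rw [Finset.card_sdiff_of_subset hTsub]; omega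
              obtain ⟨z, hz⟩ := Finset.card_eq_one.mp hone
              have hzS : z ∈ S ∧ z ∉ insert x W := by
                have : z ∈ S \ insert x W := by rw [hz]; exact Finset.mem_singleton_self z
                exact Finset.mem_sdiff.mp this
              have hzo : z ≠ ostar := by
                rintro rfl
                apply hSK
                have hKsub : K ⊆ S := by
                  rw [hKdef]
                  refine Finset.insert_subset hxS (Finset.insert_subset hzS.1 h2)
                exact (Finset.eq_of_subset_of_card_le hKsub (by omega)).symm
              have hoS : ostar ∉ S := by
                intro h
                have hoT : ostar ∉ insert x W := by
                  rw [Finset.mem_insert]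
                  push_neg
                  exact ⟨fun hh => hoO.2.2 hh, hoW⟩
                have : ostar ∈ S \ insert x W := Finset.mem_sdiff.mpr ⟨h, hoT⟩
                rw [hz, Finset.mem_singleton] at this
                exact hzo this.symm
              have hzx : z ≠ x := fun h => hzS.2 (h ▸ mem_insert_self _ _)
              have hSeq : S = insert z (insert x W) := by
                ext w
                rw [Finset.mem_insert]
                constructor
                · intro hw
                  by_cases hwT : w ∈ insert x W
                  · exact Or.inr hwT
                  · left
                    have : w ∈ S \ insert x W := Finset.mem_sdiff.mpr ⟨hw, hwT⟩
                    rw [hz, Finset.mem_singleton] at this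
                    exact this
                · rintro (rfl | hw)
                  · exact hzS.1
                  · exact hTsub hw
              have hbr : (∃ e ∈ E, e ≠ y ∧ e ∉ S ∧ e ≠ ostar) ∨
                  (S ∩ J = ∅ ∧ ostar ∉ J ∧ y ∉ J) := by
                by_cases hE₁S : E₁ ⊆ S
                · right
                  have := hgood
                  push_neg at this
                  obtain ⟨hS1, hS2⟩ := this hE₁S
                  exact ⟨hS1, hoO.2.1, hS2⟩
                · left
                  obtain ⟨e, heE₁, heS⟩ := Finset.not_subset.mp hE₁S
                  exact ⟨e, hE₁sub heE₁, (Finset.mem_erase.mp heE₁).1, heS,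
                    fun h => hoE (h ▸ hE₁sub heE₁)⟩
              have hw := hWne.choose_spec
              have hwz : hWne.choose ≠ z := fun h => hzS.2 (mem_insert_of_mem (h ▸ hw))
              obtain ⟨hS'G, hiff⟩ := step S ostar z hSG hxS hyS hzS.1 hzx hoS hoy
                ⟨hWne.choose, Finset.mem_inter.mpr ⟨mem_insert_of_mem (Finset.mem_erase.mpr
                  ⟨hwz, hTsub (mem_insert_of_mem hw)⟩), hWE hw⟩⟩ hbr
              have hzT : z ∉ insert x W := hzS.2
              have hfinal : insert ostar (S.erase z) = K := by
                rw [hSeq, Finset.erase_insert hzT, hKdef, Finset.insert_comm]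
              rw [hiff, hfinal]
            · obtain ⟨u₀, hu₀W, hu₀S⟩ := Finset.not_subset.mp h2
              have hE₁u₀ : E₁ ⊆ insert u₀ S := h1 u₀ hu₀W hu₀S
              have hu₀E : u₀ ∈ E := hWE hu₀W
              have hu₀E₁ : u₀ ∈ E₁ := hWsub hu₀W
              have hu₀y : u₀ ≠ y := (Finset.mem_erase.mp hu₀E₁).1
              have hu₀J : u₀ ∉ J := fun h => hJE u₀ h hu₀E
              have hu₀x : u₀ ≠ x := fun h => hxE (h ▸ hu₀E)
              have hu₀O : u₀ ∉ O := by rw [hOmem]; push_neg; intro h; exact absurd hu₀E h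
              have hE₁Scard : E₁.card - 1 ≤ (E₁ ∩ S).card := by
                have hsub : E₁ \ S ⊆ {u₀} := by
                  intro z hz
                  rw [Finset.mem_sdiff] at hz
                  have := hE₁u₀ hz.1
                  rw [Finset.mem_insert] at this
                  rw [Finset.mem_singleton]
                  rcases this with h | h
                  · exact h
                  · exact absurd h hz.2
                have h1' := Finset.card_le_card hsub
                rw [Finset.card_singleton] at h1'
                have h2' := Finset.card_inter_add_card_sdiff E₁ S
                omega
              -- a spare element of E₁ ∩ S to keep the predicate
              by_cases h3 : (S ∩ J).Nonempty
              · obtain ⟨zJ, hzJ⟩ := h3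
                rw [Finset.mem_inter] at hzJ
                have hzJx : zJ ≠ x := fun h => hJx₀ (h ▸ hzJ.2)
                have hzJK : zJ ∉ K := by
                  rw [hKdef, Finset.mem_insert, Finset.mem_insert]
                  push_neg
                  exact ⟨hzJx, fun h => hoO.2.1 (h ▸ hzJ.2), fun h => hJE zJ hzJ.2 (hWE h)⟩
                have hzJX : zJ ∈ J ∪ (E₁ \ W) := Finset.mem_union_left _ hzJ.2
                -- spare element of E₁ ∩ S
                have hspareE : ∃ e₃ ∈ E₁ ∩ S, e₃ ≠ zJ := by
                  have : 0 < (E₁ ∩ S).card := by omega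
                  obtain ⟨e₃, he₃⟩ := Finset.card_pos.mp this
                  exact ⟨e₃, he₃, fun h => hJE zJ hzJ.2
                    (hE₁sub (h ▸ (Finset.mem_inter.mp he₃).1))⟩
                obtain ⟨e₃, he₃, he₃zJ⟩ := hspareE
                rw [Finset.mem_inter] at he₃
                by_cases h4 : ostar ∈ S
                · -- sideways move removing zJ, using a fresh o₂
                  obtain ⟨o₂, ho₂O, ho₂S, ho₂y⟩ := existsO S hcardS hxS hyS hE₁Scard
                    (Or.inl ⟨zJ, Finset.mem_inter.mpr hzJ⟩)
                  have ho₂O' := ho₂O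
                  rw [hOmem] at ho₂O'
                  obtain ⟨hS'G, hiff⟩ := step S o₂ zJ hSG hxS hyS hzJ.1 hzJx ho₂S ho₂y
                    ⟨e₃, Finset.mem_inter.mpr ⟨mem_insert_of_mem (Finset.mem_erase.mpr
                      ⟨he₃zJ, he₃.2⟩), hE₁sub he₃.1⟩⟩
                    (Or.inl ⟨u₀, hu₀E, hu₀y, hu₀S, fun h => ho₂O'.1 (h ▸ hu₀E)⟩)
                  rw [hiff]
                  apply ih _ hS'G (mem_insert_of_mem (Finset.mem_erase.mpr ⟨Ne.symm hzJx, hxS⟩))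
                    (by rw [Finset.mem_insert]; push_neg;
                        exact ⟨Ne.symm ho₂y, fun h => hyS (Finset.mem_of_mem_erase h)⟩)
                  · rintro ⟨hc, -⟩
                    have := hc hu₀E₁
                    rcases Finset.mem_insert.mp this with h | h
                    · exact ho₂O'.1 (h ▸ hu₀E)
                    · exact hu₀S (Finset.mem_of_mem_erase h)
                  · have ho₂K : o₂ ∉ K := by
                      rw [hKdef, Finset.mem_insert, Finset.mem_insert]
                      push_neg
                      exact ⟨ho₂O'.2.2, fun h => absurd (h ▸ h4) ho₂S, fun h => ho₂O'.1 (hWE h)⟩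
                    have hzJSK : zJ ∈ S \ K := Finset.mem_sdiff.mpr ⟨hzJ.1, hzJK⟩
                    have hd : ((insert o₂ (S.erase zJ)) \ K).card = (S \ K).card := by
                      rw [move_sdiff_eq₂ ho₂K, Finset.card_insert_of_notMem
                        (fun h => ho₂S (Finset.mem_sdiff.mp (Finset.mem_of_mem_erase h)).1),
                        Finset.card_erase_of_mem hzJSK]
                      have : 0 < (S \ K).card := Finset.card_pos.mpr ⟨zJ, hzJSK⟩
                      omega
                    have ho₂X : o₂ ∉ J ∪ (E₁ \ W) := by
                      rw [Finset.mem_union]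
                      push_neg
                      exact ⟨ho₂O'.2.1, fun h => ho₂O'.1 (hE₁sub (Finset.mem_sdiff.mp h).1)⟩
                    have hrd : ((insert o₂ (S.erase zJ)) ∩ (J ∪ (E₁ \ W))).card + 1 ≤
                        (S ∩ (J ∪ (E₁ \ W))).card := by
                      have h1' := Finset.card_le_card (move_inter_subset (S := S) (t := zJ) ho₂X)
                      rw [Finset.card_erase_of_mem (Finset.mem_inter.mpr ⟨hzJ.1, hzJX⟩)] at h1'
                      have : 0 < (S ∩ (J ∪ (E₁ \ W))).card :=
                        Finset.card_pos.mpr ⟨zJ, Finset.mem_inter.mpr ⟨hzJ.1, hzJX⟩⟩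
                      omega
                    omega
                · -- forward move: bring in ostar, remove zJ
                  obtain ⟨hS'G, hiff⟩ := step S ostar zJ hSG hxS hyS hzJ.1 hzJx h4 hoy
                    ⟨e₃, Finset.mem_inter.mpr ⟨mem_insert_of_mem (Finset.mem_erase.mpr
                      ⟨he₃zJ, he₃.2⟩), hE₁sub he₃.1⟩⟩
                    (Or.inl ⟨u₀, hu₀E, hu₀y, hu₀S, fun h => hoE (h ▸ hu₀E)⟩)
                  rw [hiff]
                  apply ih _ hS'G (mem_insert_of_mem (Finset.mem_erase.mpr ⟨Ne.symm hzJx, hxS⟩))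
                    (by rw [Finset.mem_insert]; push_neg;
                        exact ⟨Ne.symm hoy, fun h => hyS (Finset.mem_of_mem_erase h)⟩)
                  · rintro ⟨hc, -⟩
                    have := hc hu₀E₁
                    rcases Finset.mem_insert.mp this with h | h
                    · exact hoE (h ▸ hu₀E)
                    · exact hu₀S (Finset.mem_of_mem_erase h)
                  · have hzJSK : zJ ∈ S \ K := Finset.mem_sdiff.mpr ⟨hzJ.1, hzJK⟩
                    have hd : ((insert ostar (S.erase zJ)) \ K).card + 1 = (S \ K).card := by
                      rw [move_sdiff_eq₁ (x := x) (y := y) hoK hzJK,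
                        Finset.card_erase_of_mem hzJSK]
                      have : 0 < (S \ K).card := Finset.card_pos.mpr ⟨zJ, hzJSK⟩
                      omega
                    have hr := hrbound (insert ostar (S.erase zJ))
                    omega
              · -- S ∩ J = ∅
                have hSJ : S ∩ J = ∅ := Finset.not_nonempty_iff_eq_empty.mp h3
                by_cases h5 : y ∈ J
                · -- the E-shuffling branch
                  have hyE : y ∉ E := hJE y h5
                  have hE₁E : E₁ = E := by rw [hE₁def, Finset.erase_eq_of_notMem hyE]
                  by_cases h6 : (S ∩ (E₁ \ W)).Nonempty
                  · obtain ⟨e₁, he₁⟩ := h6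
                    rw [Finset.mem_inter, Finset.mem_sdiff] at he₁
                    have he₁E : e₁ ∈ E := hE₁sub he₁.2.1
                    have he₁x : e₁ ≠ x := fun h => hxE (h ▸ he₁E)
                    have he₁K : e₁ ∉ K := by
                      rw [hKdef, Finset.mem_insert, Finset.mem_insert]
                      push_neg
                      exact ⟨he₁x, fun h => hoE (h ▸ he₁E), he₁.2.2⟩
                    have he₁X : e₁ ∈ J ∪ (E₁ \ W) := Finset.mem_union_right _
                      (Finset.mem_sdiff.mpr he₁.2)
                    have hsp : ∃ e₃ ∈ E₁ ∩ S, e₃ ≠ e₁ := by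
                      have hc1 : 2 ≤ (E₁ ∩ S).card := by
                        rw [hE₁E] at hE₁Scard ⊢
                        omega
                      have hpos : 0 < ((E₁ ∩ S).erase e₁).card := by
                        have := Finset.pred_card_le_card_erase (s := E₁ ∩ S) (a := e₁)
                        omega
                      obtain ⟨e₃, he₃⟩ := Finset.card_pos.mp hpos
                      rw [Finset.mem_erase] at he₃
                      exact ⟨e₃, he₃.2, he₃.1⟩
                    obtain ⟨e₃, he₃, he₃e₁⟩ := hsp
                    rw [Finset.mem_inter] at he₃
                    by_cases h7 : ostar ∈ S
                    · -- sideways: fresh o₂ in, e₁ out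
                      obtain ⟨o₂, ho₂O, ho₂S, ho₂y⟩ := existsO S hcardS hxS hyS hE₁Scard
                        (Or.inr h5)
                      have ho₂O' := ho₂O
                      rw [hOmem] at ho₂O'
                      obtain ⟨hS'G, hiff⟩ := step S o₂ e₁ hSG hxS hyS he₁.1 he₁x ho₂S ho₂y
                        ⟨e₃, Finset.mem_inter.mpr ⟨mem_insert_of_mem (Finset.mem_erase.mpr
                          ⟨he₃e₁, he₃.2⟩), hE₁sub he₃.1⟩⟩
                        (Or.inl ⟨u₀, hu₀E, hu₀y, hu₀S, fun h => ho₂O'.1 (h ▸ hu₀E)⟩)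
                      rw [hiff]
                      apply ih _ hS'G (mem_insert_of_mem (Finset.mem_erase.mpr ⟨Ne.symm he₁x, hxS⟩))
                        (by rw [Finset.mem_insert]; push_neg;
                            exact ⟨Ne.symm ho₂y, fun h => hyS (Finset.mem_of_mem_erase h)⟩)
                      · rintro ⟨hc, -⟩
                        have := hc hu₀E₁
                        rcases Finset.mem_insert.mp this with h | h
                        · exact ho₂O'.1 (h ▸ hu₀E)
                        · exact hu₀S (Finset.mem_of_mem_erase h)
                      · have ho₂K : o₂ ∉ K := by
                          rw [hKdef, Finset.mem_insert, Finset.mem_insert]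
                          push_neg
                          exact ⟨ho₂O'.2.2, fun h => absurd (h ▸ h7) ho₂S, fun h => ho₂O'.1 (hWE h)⟩
                        have he₁SK : e₁ ∈ S \ K := Finset.mem_sdiff.mpr ⟨he₁.1, he₁K⟩
                        have hd : ((insert o₂ (S.erase e₁)) \ K).card = (S \ K).card := by
                          rw [move_sdiff_eq₂ ho₂K, Finset.card_insert_of_notMem
                            (fun h => ho₂S (Finset.mem_sdiff.mp (Finset.mem_of_mem_erase h)).1),
                            Finset.card_erase_of_mem he₁SK]
                          have : 0 < (S \ K).card := Finset.card_pos.mpr ⟨e₁, he₁SK⟩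
                          omega
                        have ho₂X : o₂ ∉ J ∪ (E₁ \ W) := by
                          rw [Finset.mem_union]
                          push_neg
                          exact ⟨ho₂O'.2.1, fun h => ho₂O'.1 (hE₁sub (Finset.mem_sdiff.mp h).1)⟩
                        have hrd : ((insert o₂ (S.erase e₁)) ∩ (J ∪ (E₁ \ W))).card + 1 ≤
                            (S ∩ (J ∪ (E₁ \ W))).card := by
                          have h1' := Finset.card_le_card
                            (move_inter_subset (S := S) (t := e₁) ho₂X)
                          rw [Finset.card_erase_of_mem
                            (Finset.mem_inter.mpr ⟨he₁.1, he₁X⟩)] at h1'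
                          have : 0 < (S ∩ (J ∪ (E₁ \ W))).card :=
                            Finset.card_pos.mpr ⟨e₁, Finset.mem_inter.mpr ⟨he₁.1, he₁X⟩⟩
                          omega
                        omega
                    · -- forward: ostar in, e₁ out
                      obtain ⟨hS'G, hiff⟩ := step S ostar e₁ hSG hxS hyS he₁.1 he₁x h7 hoy
                        ⟨e₃, Finset.mem_inter.mpr ⟨mem_insert_of_mem (Finset.mem_erase.mpr
                          ⟨he₃e₁, he₃.2⟩), hE₁sub he₃.1⟩⟩
                        (Or.inl ⟨u₀, hu₀E, hu₀y, hu₀S, fun h => hoE (h ▸ hu₀E)⟩)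
                      rw [hiff]
                      apply ih _ hS'G (mem_insert_of_mem (Finset.mem_erase.mpr ⟨Ne.symm he₁x, hxS⟩))
                        (by rw [Finset.mem_insert]; push_neg;
                            exact ⟨Ne.symm hoy, fun h => hyS (Finset.mem_of_mem_erase h)⟩)
                      · rintro ⟨hc, -⟩
                        have := hc hu₀E₁
                        rcases Finset.mem_insert.mp this with h | h
                        · exact hoE (h ▸ hu₀E)
                        · exact hu₀S (Finset.mem_of_mem_erase h)
                      · have he₁SK : e₁ ∈ S \ K := Finset.mem_sdiff.mpr ⟨he₁.1, he₁K⟩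
                        have hd : ((insert ostar (S.erase e₁)) \ K).card + 1 = (S \ K).card := by
                          rw [move_sdiff_eq₁ (x := x) (y := y) hoK he₁K,
                            Finset.card_erase_of_mem he₁SK]
                          have : 0 < (S \ K).card := Finset.card_pos.mpr ⟨e₁, he₁SK⟩
                          omega
                        have hr := hrbound (insert ostar (S.erase e₁))
                        omega
                  · -- impossible: E₁ would be inside W
                    exfalso
                    have hsub : E₁ ⊆ W := by
                      intro z hzE₁
                      by_cases hzS : z ∈ S
                      · by_contra hzW
                        exact h6 ⟨z, Finset.mem_inter.mpr ⟨hzS, Finset.mem_sdiff.mpr ⟨hzE₁, hzW⟩⟩⟩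
                      · have := hE₁u₀ hzE₁
                        rcases Finset.mem_insert.mp this with h | h
                        · exact h ▸ hu₀W
                        · exact absurd h hzS
                    have := Finset.card_le_card hsub
                    rw [hE₁E, hE, hWcard] at this
                    omega
                · -- clean forward move with u₀
                  obtain ⟨hS'G, hiff⟩ := step S u₀ t₀ hSG hxS hyS ht₀.1 ht₀x hu₀S hu₀y
                    ⟨u₀, Finset.mem_inter.mpr ⟨mem_insert_self _ _, hu₀E⟩⟩
                    (Or.inr ⟨hSJ, hu₀J, h5⟩)
                  rw [hiff]
                  apply ih _ hS'G (mem_insert_of_mem (Finset.mem_erase.mpr ⟨Ne.symm ht₀x, hxS⟩))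
                    (by rw [Finset.mem_insert]; push_neg;
                        exact ⟨Ne.symm hu₀y, fun h => hyS (Finset.mem_of_mem_erase h)⟩)
                  · rintro ⟨-, hor⟩
                    rcases hor with ⟨j, hj⟩ | h
                    · rw [Finset.mem_inter, Finset.mem_insert] at hj
                      rcases hj.1 with h | h
                      · exact hu₀J (h ▸ hj.2)
                      · have : j ∈ S ∩ J := Finset.mem_inter.mpr
                          ⟨Finset.mem_of_mem_erase h, hj.2⟩
                        rw [hSJ] at this
                        exact absurd this (Finset.notMem_empty j)
                    · exact h5 h
                  · have hd : ((insert u₀ (S.erase t₀)) \ K).card + 1 = (S \ K).card := by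
                      rw [move_sdiff_eq₁ (x := x) (y := y) (hWK hu₀W) ht₀.2,
                        Finset.card_erase_of_mem (Finset.mem_sdiff.mpr ht₀)]
                      have : 0 < (S \ K).card := Finset.card_pos.mpr
                        ⟨t₀, Finset.mem_sdiff.mpr ht₀⟩
                      omega
                    have hr := hrbound (insert u₀ (S.erase t₀))
                    omega
    -- CONCLUSION of the x = x₀ case
    have hgoodB₀ := goodOf B₀ hB₀G hxB₀ hyB₀ hAB₀G
    have hgoodC := goodOf C hCG hxC hyC hswC
    have h1 := walk (5 * (B₀ \ K).card + (B₀ ∩ (J ∪ (E₁ \ W))).card) B₀ hB₀G hxB₀ hyB₀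
      hgoodB₀ le_rfl
    have h2 := walk (5 * (C \ K).card + (C ∩ (J ∪ (E₁ \ W))).card) C hCG hxC hyC
      hgoodC le_rfl
    exact h2.mpr (h1.mp hB₀F)
  · have hx₀x : x₀ ≠ x := Ne.symm hxx₀
    by_cases hxE : x ∈ E
    · -- x ∈ E
      have hxJ : x ∉ J := fun h => hJE x h hxE
      by_cases hyE : y ∈ E
      · -- contradiction from B₀
        exfalso
        rcases memJ3.mp hB₀G with ⟨-, h1 | h2 | h3⟩
        · exact hyB₀ (h1.1 hyE)
        · apply hAB₀G
          rw [memJ3_x0 hk hE (mem_swp.mpr (Or.inr ⟨h2 (mem_union_right _ (mem_singleton_self _)), hx₀x⟩))]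
          refine ⟨by rw [swp_card hxB₀ hyB₀]; exact hcardB₀, Or.inl ⟨y, ?_⟩⟩
          exact Finset.mem_inter.mpr ⟨y_mem_swp, hyE⟩
        · apply hAB₀G
          rw [memJ3_x0 hk hE (mem_swp.mpr (Or.inr ⟨h3.1, hx₀x⟩))]
          refine ⟨by rw [swp_card hxB₀ hyB₀]; exact hcardB₀, Or.inl ⟨y, ?_⟩⟩
          exact Finset.mem_inter.mpr ⟨y_mem_swp, hyE⟩
      · -- merged cases (b) and (f) : x ∈ E, y ∉ E ∪ {x₀}
        -- shape of possible non-F members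
        have shapeBF : ∀ D : Finset (Fin n), D ∈ J3fam n k x₀ E J → x ∈ D → y ∉ D →
            insert y (D.erase x) ∉ J3fam n k x₀ E J →
            (∃ j ∈ J, j ≠ y ∧ D = insert j E) ∨
            (x₀ ∈ D ∧ D ∩ E = {x} ∧ ∃ l ∈ J, l ≠ y ∧ l ∉ D) := by
          intro D hD hxD hyD hswD
          rcases memJ3.mp hD with ⟨hcD, h1 | h2 | h3⟩
          · obtain ⟨j, hjJ, hjE, hDeq⟩ := shapeE D hD h1.1 h1.2
            have hjy : j ≠ y := by rintro rfl; exact hyD (hDeq ▸ mem_insert_self _ _)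
            exact Or.inl ⟨j, hjJ, hjy, hDeq⟩
          · -- x₀ ∈ D via h2
            have hx₀D : x₀ ∈ D := h2 (mem_union_right _ (mem_singleton_self _))
            right
            refine ⟨hx₀D, ?_, ?_⟩
            · -- D ∩ E = {x}
              apply Finset.Subset.antisymm
              · intro z hz
                rw [Finset.mem_inter] at hz
                rw [Finset.mem_singleton]
                by_contra hzx
                apply hswD
                rw [memJ3_x0 hk hE (mem_swp.mpr (Or.inr ⟨hx₀D, hx₀x⟩))]
                exact ⟨by rw [swp_card hxD hyD]; exact hcD,
                  Or.inl ⟨z, Finset.mem_inter.mpr ⟨mem_swp.mpr (Or.inr ⟨hz.1, hzx⟩), hz.2⟩⟩⟩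
              · intro z hz
                rw [Finset.mem_singleton] at hz
                subst hz
                exact Finset.mem_inter.mpr ⟨hxD, hxE⟩
            · -- some page not in D
              by_contra hcon
              push_neg at hcon
              apply hswD
              rw [memJ3_x0 hk hE (mem_swp.mpr (Or.inr ⟨hx₀D, hx₀x⟩))]
              refine ⟨by rw [swp_card hxD hyD]; exact hcD, Or.inr ?_⟩
              intro z hzJ
              rcases eq_or_ne z y with rfl | hzy
              · exact y_mem_swp
              · exact mem_swp.mpr (Or.inr ⟨hcon z hzJ hzy, fun h => hxJ (h ▸ hzJ)⟩)
          · right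
            refine ⟨h3.1, ?_, ?_⟩
            · apply Finset.Subset.antisymm
              · intro z hz
                rw [Finset.mem_inter] at hz
                rw [Finset.mem_singleton]
                by_contra hzx
                apply hswD
                rw [memJ3_x0 hk hE (mem_swp.mpr (Or.inr ⟨h3.1, hx₀x⟩))]
                exact ⟨by rw [swp_card hxD hyD]; exact hcD,
                  Or.inl ⟨z, Finset.mem_inter.mpr ⟨mem_swp.mpr (Or.inr ⟨hz.1, hzx⟩), hz.2⟩⟩⟩
              · intro z hz
                rw [Finset.mem_singleton] at hz
                subst hz
                exact Finset.mem_inter.mpr ⟨hxD, hxE⟩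
            · by_contra hcon
              push_neg at hcon
              apply hswD
              rw [memJ3_x0 hk hE (mem_swp.mpr (Or.inr ⟨h3.1, hx₀x⟩))]
              refine ⟨by rw [swp_card hxD hyD]; exact hcD, Or.inr ?_⟩
              intro z hzJ
              rcases eq_or_ne z y with rfl | hzy
              · exact y_mem_swp
              · exact mem_swp.mpr (Or.inr ⟨hcon z hzJ hzy, fun h => hxJ (h ▸ hzJ)⟩)
        -- the page sets
        have hPG : ∀ j ∈ J, insert j E ∈ J3fam n k x₀ E J := by
          intro j hjJ
          rw [memJ3]
          refine ⟨?_, Or.inl ⟨Finset.subset_insert _ _, ⟨j, Finset.mem_inter.mpr ⟨mem_insert_self _ _, hjJ⟩⟩⟩⟩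
          rw [Finset.card_insert_of_notMem (hJE j hjJ)]
          omega
        have hyP : ∀ j ∈ J, j ≠ y → y ∉ insert j E := by
          intro j hjJ hjy h
          rcases Finset.mem_insert.mp h with h | h
          · exact hjy h.symm
          · exact hyE h
        -- Claim 1: some page is not in F
        have claim1 : ∃ j ∈ J, j ≠ y ∧ insert j E ∉ F := by
          rcases shapeBF B₀ hB₀G hxB₀ hyB₀ hAB₀G with ⟨j, hjJ, hjy, hB₀eq⟩ | ⟨hx₀B₀, hB₀E, l, hlJ, hly, hlB₀⟩
          · exact ⟨j, hjJ, hjy, hB₀eq ▸ hB₀F⟩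
          · refine ⟨l, hlJ, hly, ?_⟩
            refine hrule B₀ _ hB₀G hB₀F (hPG l hlJ) (hyP l hlJ hly) ?_
            intro z hz
            rw [Finset.mem_inter, Finset.mem_insert] at hz
            rw [Finset.mem_singleton]
            rcases hz.1 with rfl | hzE
            · exact absurd hz.2 hlB₀
            · have : z ∈ B₀ ∩ E := Finset.mem_inter.mpr ⟨hz.2, hzE⟩
              rw [hB₀E, Finset.mem_singleton] at this
              exact this
        -- Claim 2: propagate between pages
        have claim2 : ∀ l ∈ J, ∀ j ∈ J, l ≠ y → j ≠ y → insert l E ∉ F → insert j E ∉ F := by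
          intro l hlJ j hjJ hly hjy hlF
          rcases eq_or_ne l j with rfl | hlj
          · exact hlF
          · -- construct C₀
            have hpool : k - 2 ≤ (univ \ (E ∪ {x₀, y, l, j})).card := by
              have h1 : (E ∪ {x₀, y, l, j}).card ≤ (k - 1) + 4 := by
                calc (E ∪ {x₀, y, l, j}).card ≤ E.card + ({x₀, y, l, j} : Finset (Fin n)).card :=
                    Finset.card_union_le _ _
                _ ≤ (k - 1) + 4 := by
                    have i1 := Finset.card_insert_le x₀ ({y, l, j} : Finset (Fin n))
                    have i2 := Finset.card_insert_le y ({l, j} : Finset (Fin n))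
                    have i3 := Finset.card_insert_le l ({j} : Finset (Fin n))
                    simp only [Finset.card_singleton] at i3
                    omega
              have := poolcard (E ∪ {x₀, y, l, j})
              omega
            obtain ⟨Q, hQsub, hQcard⟩ := Finset.exists_subset_card_eq hpool
            have hQ : ∀ z ∈ Q, z ∉ E ∧ z ≠ x₀ ∧ z ≠ y ∧ z ≠ l ∧ z ≠ j := by
              intro z hz
              have := hQsub hz
              rw [Finset.mem_sdiff, Finset.mem_union, Finset.mem_insert, Finset.mem_insert,
                Finset.mem_insert, Finset.mem_singleton] at this
              push_neg at this
              exact ⟨this.2.1, this.2.2.1, this.2.2.2.1, this.2.2.2.2.1, this.2.2.2.2.2⟩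
            set C₀ := insert x₀ (insert x Q) with hC₀def
            have hxQ : x ∉ Q := fun h => (hQ x h).1 hxE
            have hx₀Q : x₀ ∉ Q := fun h => (hQ x₀ h).2.1 rfl
            have hx₀C₀ : x₀ ∈ C₀ := mem_insert_self _ _
            have hcardC₀ : C₀.card = k := by
              rw [hC₀def, Finset.card_insert_of_notMem, Finset.card_insert_of_notMem hxQ]
              · omega
              · rw [Finset.mem_insert]
                push_neg
                exact ⟨hx₀x, hx₀Q⟩
            have hC₀G : C₀ ∈ J3fam n k x₀ E J := by
              rw [memJ3_x0 hk hE hx₀C₀]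
              exact ⟨hcardC₀, Or.inl ⟨x, Finset.mem_inter.mpr
                ⟨mem_insert_of_mem (mem_insert_self _ _), hxE⟩⟩⟩
            have hyC₀ : y ∉ C₀ := by
              rw [hC₀def, Finset.mem_insert, Finset.mem_insert]
              push_neg
              exact ⟨hyx₀, fun h => hyE (h ▸ hxE), fun h => (hQ y h).2.2.1 rfl⟩
            have hC₀F : C₀ ∉ F := by
              refine hrule _ _ (hPG l hlJ) hlF hC₀G hyC₀ ?_
              intro z hz
              rw [Finset.mem_inter, hC₀def, Finset.mem_insert, Finset.mem_insert,
                Finset.mem_insert] at hz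
              rw [Finset.mem_singleton]
              rcases hz.1 with rfl | rfl | hzQ
              · exfalso
                rcases hz.2 with h | h
                · exact hJx₀ (by rw [h]; exact hlJ)
                · exact hx₀ h
              · rfl
              · exfalso
                rcases hz.2 with h | h
                · exact (hQ z hzQ).2.2.2.1 h
                · exact (hQ z hzQ).1 h
            refine hrule _ _ hC₀G hC₀F (hPG j hjJ) (hyP j hjJ hjy) ?_
            intro z hz
            rw [Finset.mem_inter, Finset.mem_insert] at hz
            rw [Finset.mem_singleton]
            rcases hz.1 with rfl | hzE
            · exfalso
              rcases Finset.mem_insert.mp hz.2 with h | h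
              · exact hJx₀ (h ▸ hjJ)
              · rcases Finset.mem_insert.mp h with h | h
                · exact hxJ (h ▸ hjJ)
                · exact (hQ z h).2.2.2.2 rfl
            · rcases Finset.mem_insert.mp hz.2 with h | h
              · exact absurd (h ▸ hzE) hx₀
              · rcases Finset.mem_insert.mp h with h | h
                · exact h
                · exact absurd hzE (hQ z h).1
        -- conclude for C
        rcases shapeBF C hCG hxC hyC hswC with ⟨j, hjJ, hjy, hCeq⟩ | ⟨hx₀C, hCE, l, hlJ, hly, hlC⟩
        · obtain ⟨j₀, hj₀J, hj₀y, hj₀F⟩ := claim1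
          exact hCeq ▸ claim2 j₀ hj₀J j hjJ hj₀y hjy hj₀F
        · obtain ⟨j₀, hj₀J, hj₀y, hj₀F⟩ := claim1
          have hlF : insert l E ∉ F := claim2 j₀ hj₀J l hlJ hj₀y hly hj₀F
          refine hrule _ _ (hPG l hlJ) hlF hCG hyC ?_
          intro z hz
          rw [Finset.mem_inter, Finset.mem_insert] at hz
          rw [Finset.mem_singleton]
          rcases hz.2 with rfl | hzE
          · exact absurd hz.1 hlC
          · have : z ∈ C ∩ E := Finset.mem_inter.mpr ⟨hz.1, hzE⟩
            rw [hCE, Finset.mem_singleton] at this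
            exact this
    · by_cases hxJ : x ∈ J
      · -- x ∈ J
        by_cases hyJ : y ∈ J
        · -- contradiction
          exfalso
          rcases memJ3.mp hB₀G with ⟨-, h1 | h2 | h3⟩
          · obtain ⟨j, hjJ, hjE, hB₀eq⟩ := shapeE B₀ hB₀G h1.1 h1.2
            have hjx : j = x := by
              have := hB₀eq ▸ hxB₀
              rcases Finset.mem_insert.mp this with h | h
              · exact h.symm
              · exact absurd h hxE
            apply hAB₀G
            rw [memJ3]
            constructor
            · rw [swp_card hxB₀ hyB₀]; exact hcardB₀
            · refine Or.inl ⟨?_, ⟨y, Finset.mem_inter.mpr ⟨y_mem_swp, hyJ⟩⟩⟩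
              intro z hzE
              refine mem_swp.mpr (Or.inr ⟨hB₀eq ▸ mem_insert_of_mem hzE, fun h => hxE (h ▸ hzE)⟩)
          · exact hyB₀ (h2 (mem_union_left _ hyJ))
          · apply hAB₀G
            rw [memJ3_x0 hk hE (mem_swp.mpr (Or.inr ⟨h3.1, hx₀x⟩))]
            obtain ⟨e, he⟩ := h3.2
            rw [Finset.mem_inter] at he
            refine ⟨by rw [swp_card hxB₀ hyB₀]; exact hcardB₀, Or.inl ⟨e, ?_⟩⟩
            exact Finset.mem_inter.mpr ⟨mem_swp.mpr (Or.inr ⟨he.1, fun h => hxE (h ▸ he.2)⟩), he.2⟩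
        · by_cases hyE : y ∈ E
          · -- contradiction via fact4
            exfalso
            have hJx : (J.erase x).Nonempty := by
              rw [← Finset.card_pos, Finset.card_erase_of_mem hxJ]
              omega
            obtain ⟨l, hl⟩ := hJx
            rw [Finset.mem_erase] at hl
            set A := insert l E with hAdef
            have hlE : l ∉ E := hJE l hl.2
            have hAG : A ∈ J3fam n k x₀ E J := by
              rw [memJ3]
              refine ⟨by rw [hAdef, Finset.card_insert_of_notMem hlE]; omega,
                Or.inl ⟨Finset.subset_insert _ _, ⟨l, Finset.mem_inter.mpr ⟨mem_insert_self _ _, hl.2⟩⟩⟩⟩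
            have hyA : y ∈ A := mem_insert_of_mem hyE
            have hxA : x ∉ A := by
              rw [hAdef, Finset.mem_insert]
              push_neg
              exact ⟨Ne.symm hl.1, hxE⟩
            obtain ⟨hA'G, -⟩ := fact4 hxy hshift A hAG hyA hxA
            obtain ⟨e₂, he₂E, he₂y, -⟩ := pick2 y y
            refine notG (insert x (A.erase y)) ?_ ?_ hA'G
            · rw [mem_swp]
              rintro (h | ⟨h, -⟩)
              · exact hxx₀ h.symm
              · rcases Finset.mem_insert.mp h with h | h
                · exact hJx₀ (h ▸ hl.2)
                · exact hx₀ h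
            · intro hEsub
              have := hEsub hyE
              rw [mem_swp] at this
              rcases this with h | ⟨-, h⟩
              · exact hxE (h ▸ hyE) -- y = x impossible: h : y = x
              · exact h rfl
          · -- case (c): x ∈ J, y ∉ E ∪ J ∪ {x₀}
            set P := insert x E with hPdef
            have hPG : P ∈ J3fam n k x₀ E J := by
              rw [memJ3]
              refine ⟨by rw [hPdef, Finset.card_insert_of_notMem hxE]; omega,
                Or.inl ⟨Finset.subset_insert _ _, ⟨x, Finset.mem_inter.mpr ⟨mem_insert_self _ _, hxJ⟩⟩⟩⟩
            have hyP : y ∉ P := by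
              rw [hPdef, Finset.mem_insert]
              push_neg
              exact ⟨Ne.symm hxy, hyE⟩
            -- shape lemma for this case
            have shapeC : ∀ D : Finset (Fin n), D ∈ J3fam n k x₀ E J → x ∈ D → y ∉ D →
                insert y (D.erase x) ∉ J3fam n k x₀ E J →
                D = P ∨ (x₀ ∈ D ∧ D ∩ E = ∅) := by
              intro D hD hxD hyD hswD
              rcases memJ3.mp hD with ⟨hcD, h1 | h2 | h3⟩
              · obtain ⟨j, hjJ, hjE, hDeq⟩ := shapeE D hD h1.1 h1.2
                have hjx : j = x := by
                  have := hDeq ▸ hxD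
                  rcases Finset.mem_insert.mp this with h | h
                  · exact h.symm
                  · exact absurd h hxE
                exact Or.inl (by rw [hDeq, hjx])
              · refine Or.inr ⟨h2 (mem_union_right _ (mem_singleton_self _)), ?_⟩
                by_contra hne
                obtain ⟨e, he⟩ := Finset.nonempty_iff_ne_empty.mpr hne
                rw [Finset.mem_inter] at he
                apply hswD
                rw [memJ3_x0 hk hE (mem_swp.mpr (Or.inr
                  ⟨h2 (mem_union_right _ (mem_singleton_self _)), hx₀x⟩))]
                refine ⟨by rw [swp_card hxD hyD]; exact hcD, Or.inl ⟨e, ?_⟩⟩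
                exact Finset.mem_inter.mpr ⟨mem_swp.mpr (Or.inr ⟨he.1, fun h => hxE (h ▸ he.2)⟩), he.2⟩
              · refine Or.inr ⟨h3.1, ?_⟩
                by_contra hne
                obtain ⟨e, he⟩ := Finset.nonempty_iff_ne_empty.mpr hne
                rw [Finset.mem_inter] at he
                apply hswD
                rw [memJ3_x0 hk hE (mem_swp.mpr (Or.inr ⟨h3.1, hx₀x⟩))]
                refine ⟨by rw [swp_card hxD hyD]; exact hcD, Or.inl ⟨e, ?_⟩⟩
                exact Finset.mem_inter.mpr ⟨mem_swp.mpr (Or.inr ⟨he.1, fun h => hxE (h ▸ he.2)⟩), he.2⟩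
            have hPF : P ∉ F := by
              rcases shapeC B₀ hB₀G hxB₀ hyB₀ hAB₀G with hB₀eq | ⟨hx₀B₀, hB₀E⟩
              · exact hB₀eq ▸ hB₀F
              · refine hrule B₀ _ hB₀G hB₀F hPG hyP ?_
                intro z hz
                rw [Finset.mem_inter, hPdef, Finset.mem_insert] at hz
                rw [Finset.mem_singleton]
                rcases hz.1 with rfl | hzE
                · rfl
                · exfalso
                  have : z ∈ B₀ ∩ E := Finset.mem_inter.mpr ⟨hz.2, hzE⟩
                  rw [hB₀E] at this
                  exact absurd this (Finset.notMem_empty z)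
            rcases shapeC C hCG hxC hyC hswC with hCeq | ⟨hx₀C, hCE⟩
            · exact hCeq ▸ hPF
            · refine hrule P _ hPG hPF hCG hyC ?_
              intro z hz
              rw [Finset.mem_inter, hPdef, Finset.mem_insert] at hz
              rw [Finset.mem_singleton]
              rcases hz.2 with rfl | hzE
              · rfl
              · exfalso
                have : z ∈ C ∩ E := Finset.mem_inter.mpr ⟨hz.1, hzE⟩
                rw [hCE] at this
                exact absurd this (Finset.notMem_empty z)
      · -- x outside everything: contradiction
        exfalso
        rcases memJ3.mp hB₀G with ⟨-, h1 | h2 | h3⟩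
        · obtain ⟨j, hjJ, hjE, hB₀eq⟩ := shapeE B₀ hB₀G h1.1 h1.2
          have := hB₀eq ▸ hxB₀
          rcases Finset.mem_insert.mp this with h | h
          · exact hxJ (h ▸ hjJ)
          · exact hxE h
        · apply hAB₀G
          rw [memJ3]
          refine ⟨by rw [swp_card hxB₀ hyB₀]; exact hcardB₀, Or.inr (Or.inl ?_)⟩
          intro z hz
          have hzB₀ : z ∈ B₀ := h2 hz
          refine mem_swp.mpr (Or.inr ⟨hzB₀, ?_⟩)
          rcases Finset.mem_union.mp hz with h | h
          · exact fun he => hxJ (he ▸ h)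
          · rw [Finset.mem_singleton] at h
            exact fun he => hxx₀ (he.symm.trans h)
        · apply hAB₀G
          rw [memJ3_x0 hk hE (mem_swp.mpr (Or.inr ⟨h3.1, hx₀x⟩))]
          obtain ⟨e, he⟩ := h3.2
          rw [Finset.mem_inter] at he
          refine ⟨by rw [swp_card hxB₀ hyB₀]; exact hcardB₀, Or.inl ⟨e, ?_⟩⟩
          exact Finset.mem_inter.mpr ⟨mem_swp.mpr (Or.inr ⟨he.1, fun h => hxE (h ▸ he.2)⟩), he.2⟩

/-- If a shift of a `k`-uniform intersecting family equals `J₃`, then the original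
family is isomorphic to `J₃`. -/
theorem stmt_13 (n k : ℕ) (hk : 4 ≤ k) (hn : 2 * k + 1 ≤ n)
    (F : Finset (Finset (Fin n)))
    (huniform : ∀ A ∈ F, A.card = k)
    (hint : ∀ A ∈ F, ∀ B ∈ F, (A ∩ B).Nonempty)
    (x y : Fin n) (hxy : x < y)
    (x₀ : Fin n) (E J : Finset (Fin n))
    (hE : E.card = k - 1) (hx₀ : x₀ ∉ E)
    (hJ : J.card = 3) (hJdisj : Disjoint J (insert x₀ E))
    (hshift : shiftFam x y F = J3fam n k x₀ E J) :
    ∃ σ : Equiv.Perm (Fin n),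
      F.image (fun G => G.image σ) = J3fam n k x₀ E J := by
  have hxy' : x ≠ y := ne_of_lt hxy
  by_cases hGF : ∀ B ∈ J3fam n k x₀ E J, B ∈ F
  · -- F = J3fam
    have hF_eq : F = J3fam n k x₀ E J := by
      apply Finset.Subset.antisymm
      · intro A hA
        by_contra hAG
        obtain ⟨-, -, hBG, hBF⟩ := fact3 hxy' hshift A hA hAG
        exact hBF (hGF _ hBG)
      · intro B hB; exact hGF B hB
    refine ⟨Equiv.refl _, ?_⟩
    have himg : (fun (A : Finset (Fin n)) => A.image (⇑(Equiv.refl (Fin n)))) = id := by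
      funext A; simp
    rw [himg, Finset.image_id, hF_eq]
  · push_neg at hGF
    obtain ⟨B₀, hB₀G, hB₀F⟩ := hGF
    have key := key_lemma hk hn hxy' hE hx₀ hJ hJdisj hshift hint B₀ hB₀G hB₀F
    -- F = (J3fam).image (image (swap x y))
    have hFeq : F = (J3fam n k x₀ E J).image (fun B => B.image (Equiv.swap x y)) := by
      apply Finset.Subset.antisymm
      · intro A hA
        rw [Finset.mem_image]
        by_cases hAG : A ∈ J3fam n k x₀ E J
        · by_cases hxA : x ∈ A
          · by_cases hyA : y ∈ A
            · exact ⟨A, hAG, image_swap_id (by tauto)⟩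
            · have hBG : insert y (A.erase x) ∈ J3fam n k x₀ E J := by
                by_contra h
                exact key A hAG hxA hyA h hA
              refine ⟨insert y (A.erase x), hBG, ?_⟩
              rw [Equiv.swap_comm,
                image_swap_left (Ne.symm hxy') y_mem_swp (x_not_mem_swp hxy'),
                swp_swp hxy' hxA hyA]
          · by_cases hyA : y ∈ A
            · obtain ⟨hBG, -⟩ := fact4 hxy' hshift A hAG hyA hxA
              refine ⟨insert x (A.erase y), hBG, ?_⟩
              rw [image_swap_left hxy' (mem_insert_self _ _) (x_not_mem_swp (Ne.symm hxy')),
                swp_swp (Ne.symm hxy') hyA hxA]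
            · exact ⟨A, hAG, image_swap_id (by tauto)⟩
        · obtain ⟨hyA, hxA, hBG, -⟩ := fact3 hxy' hshift A hA hAG
          refine ⟨insert x (A.erase y), hBG, ?_⟩
          rw [image_swap_left hxy' (mem_insert_self _ _) (x_not_mem_swp (Ne.symm hxy')),
            swp_swp (Ne.symm hxy') hyA hxA]
      · intro A hA
        rw [Finset.mem_image] at hA
        obtain ⟨B, hBG, rfl⟩ := hA
        by_cases hxB : x ∈ B
        · by_cases hyB : y ∈ B
          · rw [image_swap_id (by tauto)]
            exact fact1 hxy' hshift B hBG (Or.inr hyB)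
          · rw [image_swap_left hxy' hxB hyB]
            by_cases hA'G : insert y (B.erase x) ∈ J3fam n k x₀ E J
            · exact fact1 hxy' hshift _ hA'G (Or.inr y_mem_swp)
            · have hBF : B ∉ F := key B hBG hxB hyB hA'G
              obtain ⟨-, -, h, -⟩ := fact2 hxy' hshift B hBG hBF
              exact h
        · by_cases hyB : y ∈ B
          · have : B.image (Equiv.swap x y) = insert x (B.erase y) := by
              rw [Equiv.swap_comm]
              exact image_swap_left (Ne.symm hxy') hyB hxB
            rw [this]
            exact (fact4 hxy' hshift B hBG hyB hxB).2
          · rw [image_swap_id (by tauto)]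
            exact fact1 hxy' hshift B hBG (Or.inl hxB)
    refine ⟨Equiv.swap x y, ?_⟩
    rw [hFeq, Finset.image_image]
    have hcomp : ((fun B : Finset (Fin n) => B.image (⇑(Equiv.swap x y))) ∘
        (fun B : Finset (Fin n) => B.image (⇑(Equiv.swap x y)))) = id := by
      funext B
      simp only [Function.comp_apply, Finset.image_image, id]
      have : (⇑(Equiv.swap x y) ∘ ⇑(Equiv.swap x y)) = id := by
        funext z; simp
      rw [this, Finset.image_id]
    rw [hcomp, Finset.image_id]
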